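/- arXiv:2605.08101 — 2 statements merged into one kernel-verified Lean document; each statement's English description precedes it below -/
import Mathlib

section
/- Let A be an n×n real symmetric matrix (n ≥ 2) such that every (n−1)×(n−1) principal submatrix of A is positive definite and det(A) < 0. Then A has exactly one negative eigenvalue, and all other eigenvalues are strictly positive. -/
open Matrix

/-!
If two eigenvalues of `A` were `≤ 0`, the quadratic form of `A` would be `≤ 0` on the plane
spanned by their eigenvectors. That plane meets the hyperplane `x k = 0` nontrivially, which
contradicts the positive definiteness of the principal submatrix `A(k)`. Since `det A` is the
product of the eigenvalues, `det A < 0` forces one of them to be negative.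
-/

namespace Matrix

variable {ι R : Type*} [Fintype ι]

lemma dotProduct_comp_subtypeVal [NonUnitalNonAssocSemiring R] {p : ι → Prop} [DecidablePred p]
    (u w : ι → R) (h : ∀ i, ¬p i → u i * w i = 0) :
    (u ∘ Subtype.val : Subtype p → R) ⬝ᵥ (w ∘ Subtype.val) = u ⬝ᵥ w := by
  rw [dotProduct, dotProduct, ← Fintype.sum_subtype_add_sum_subtype p,
    Fintype.sum_eq_zero (fun i : {i // ¬p i} => u i * w i) fun i => h i i.2, add_zero]
  rfl

lemma dotProduct_mulVec_pos_of_posDef_submatrix [CommRing R] [PartialOrder R] [StarRing R]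
    {A : Matrix ι ι R} {p : ι → Prop}
    (hA : (A.submatrix (Subtype.val : Subtype p → ι) Subtype.val).PosDef)
    {x : ι → R} (hx : x ≠ 0) (hxp : ∀ i, ¬p i → x i = 0) : 0 < star x ⬝ᵥ (A *ᵥ x) := by
  classical
  have hrestrict : x ∘ Subtype.val ≠ (0 : Subtype p → R) := by
    obtain ⟨i, hi⟩ := Function.ne_iff.mp hx
    exact Function.ne_iff.mpr ⟨⟨i, by_contra fun h => hi (hxp i h)⟩, hi⟩
  have hmulVec : A.submatrix Subtype.val Subtype.val *ᵥ (x ∘ Subtype.val) =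
      (A *ᵥ x) ∘ (Subtype.val : Subtype p → ι) :=
    funext fun i => dotProduct_comp_subtypeVal (p := p) (A i) x fun j hj => by simp [hxp j hj]
  have hpos := hA.dotProduct_mulVec_pos hrestrict
  change 0 < (star x ∘ Subtype.val) ⬝ᵥ _ at hpos
  rwa [hmulVec, dotProduct_comp_subtypeVal _ _ fun i hi => by simp [hxp i hi]] at hpos

lemma _root_.OrthonormalBasis.dotProduct_eq_ite [DecidableEq ι]
    (b : OrthonormalBasis ι ℝ (EuclideanSpace ℝ ι)) (i j : ι) :
    ⇑(b i) ⬝ᵥ ⇑(b j) = if i = j then 1 else 0 := by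
  rw [← orthonormal_iff_ite.mp b.orthonormal i j, EuclideanSpace.inner_eq_star_dotProduct,
    star_trivial, dotProduct_comm]

theorem IsHermitian.eigenvalues_pos_or_pos_of_posDef_submatrix [DecidableEq ι]
    {A : Matrix ι ι ℝ} (hA : A.IsHermitian) {k : ι}
    (hk : (A.submatrix (Subtype.val : {j // j ≠ k} → ι) Subtype.val).PosDef)
    {i j : ι} (hij : i ≠ j) : 0 < hA.eigenvalues i ∨ 0 < hA.eigenvalues j := by
  by_contra! hle
  set v := fun l => ⇑(hA.eigenvectorBasis l)
  obtain ⟨a, b, hab, hxk⟩ : ∃ a b : ℝ, (a ≠ 0 ∨ b ≠ 0) ∧ a * v i k + b * v j k = 0 := by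
    by_cases h : v i k = 0
    · exact ⟨1, 0, by simp, by simp [h]⟩
    · exact ⟨v j k, -v i k, Or.inr (neg_ne_zero.mpr h), by ring⟩
  set x := a • v i + b • v j
  have hxi : x ⬝ᵥ v i = a := by
    simp [x, v, add_dotProduct, OrthonormalBasis.dotProduct_eq_ite, hij.symm]
  have hxj : x ⬝ᵥ v j = b := by
    simp [x, v, add_dotProduct, OrthonormalBasis.dotProduct_eq_ite, hij]
  have hx : x ≠ 0 := by
    rintro hx
    rw [hx, zero_dotProduct] at hxi hxj
    grind
  have hquad : x ⬝ᵥ (A *ᵥ x) = a ^ 2 * hA.eigenvalues i + b ^ 2 * hA.eigenvalues j := by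
    have hAx : A *ᵥ x = (a * hA.eigenvalues i) • v i + (b * hA.eigenvalues j) • v j := by
      simp only [x, v, mulVec_add, mulVec_smul, mulVec_eigenvectorBasis, smul_smul]
    rw [hAx, dotProduct_add, dotProduct_smul, dotProduct_smul, hxi, hxj, smul_eq_mul, smul_eq_mul]
    ring
  have hpos := dotProduct_mulVec_pos_of_posDef_submatrix hk hx fun l hl => by
    rw [not_not.mp hl]; simpa [x] using hxk
  rw [star_trivial, hquad] at hpos
  nlinarith [sq_nonneg a, sq_nonneg b]

lemma IsHermitian.exists_eigenvalues_neg_of_det_neg [DecidableEq ι] {A : Matrix ι ι ℝ}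
    (hA : A.IsHermitian) (hdet : A.det < 0) : ∃ i, hA.eigenvalues i < 0 := by
  by_contra! h
  rw [hA.det_eq_prod_eigenvalues] at hdet
  exact hdet.not_ge (Finset.prod_nonneg fun i _ => h i)

end Matrix

theorem one_negative_eigenvalue_of_locally_pd_general
    (n : ℕ) (A : Matrix (Fin n) (Fin n) ℝ) (hA : A.IsHermitian)
    (hloc : ∀ i : Fin n,
      (A.submatrix (fun j : {j : Fin n // j ≠ i} => (j : Fin n))
        (fun j : {j : Fin n // j ≠ i} => (j : Fin n))).PosDef)
    (hdet : A.det < 0) :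
    ∃ i₀ : Fin n, hA.eigenvalues i₀ < 0 ∧ ∀ i : Fin n, i ≠ i₀ → 0 < hA.eigenvalues i := by
  obtain ⟨i₀, hi₀⟩ := hA.exists_eigenvalues_neg_of_det_neg hdet
  exact ⟨i₀, hi₀, fun i hi =>
    (hA.eigenvalues_pos_or_pos_of_posDef_submatrix (hloc i₀) hi).resolve_right hi₀.not_gt⟩

/-- A matrix whose principal submatrices of size `n-1` are all PD and whose determinant is
negative has exactly one negative eigenvalue; all other eigenvalues are positive. -/
theorem one_negative_eigenvalue_of_locally_pd
    (n : ℕ) (hn : 2 ≤ n) (A : Matrix (Fin n) (Fin n) ℝ) (hA : A.IsHermitian)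
    (hloc : ∀ i : Fin n,
      (A.submatrix (fun j : {j : Fin n // j ≠ i} => (j : Fin n))
        (fun j : {j : Fin n // j ≠ i} => (j : Fin n))).PosDef)
    (hdet : A.det < 0) :
    ∃ i₀ : Fin n, hA.eigenvalues i₀ < 0 ∧ ∀ i : Fin n, i ≠ i₀ → 0 < hA.eigenvalues i :=
  one_negative_eigenvalue_of_locally_pd_general n A hA hloc hdet
end

section
/- (Extended Hadamard inequality) Let n ≥ 3 and let A = (a_{ij}) be an n×n real symmetric matrix such that every (n−1)×(n−1) principal submatrix of A is positive semidefinite and det(A) < 0. Then det(A) ≥ −(1/(n−2))·((n−1)/(n−2))^(n−1) · a_{11}·a_{22}···a_{nn}. -/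
/-!
Scale `A` to `B = D A D` with unit diagonal; this is possible because a zero diagonal entry of `A`
would, through the positive semidefinite `2 × 2` minors, force a zero row. The eigenvalues of `B`
sum to `n`. Since the quadratic form of `B` is nonnegative on every coordinate hyperplane, `B` has
exactly one negative eigenvalue `-m`. The diagonal entries of `B⁻¹` are principal minors divided by
`det B`, hence nonpositive, so the reciprocals of the eigenvalues have nonpositive sum. The positive
eigenvalues `λ` thus satisfy `∑ λ = n + m` and `∑ 1/λ ≤ 1/m`: Cauchy–Schwarz gives
`m ≤ 1/(n-2)`, and AM–GM then bounds `-det B = m ∏ λ`.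
-/

open Matrix Finset

namespace Matrix

variable {ι R : Type*}

def deleteRowCol (A : Matrix ι ι R) (i : ι) : Matrix {j // j ≠ i} {j // j ≠ i} R :=
  A.submatrix Subtype.val Subtype.val

@[simp]
lemma deleteRowCol_apply (A : Matrix ι ι R) (i : ι) (j k : {j // j ≠ i}) :
    A.deleteRowCol i j k = A j k :=
  rfl

lemma PosSemidef.apply_sq_le_mul {M : Matrix ι ι ℝ} (hM : M.PosSemidef) (a b : ι) :
    M a b ^ 2 ≤ M a a * M b b := by
  have hdet := (hM.submatrix ![a, b]).det_nonneg
  have hsymm : M b a = M a b := by simpa using hM.isHermitian.apply a b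
  rw [det_fin_two] at hdet
  simp only [submatrix_apply, cons_val_zero, cons_val_one, hsymm] at hdet
  nlinarith

variable [Fintype ι] [DecidableEq ι]

lemma diag_pos_of_posSemidef_deleteRowCol {A : Matrix ι ι ℝ} (hι : 3 ≤ Fintype.card ι)
    (hloc : ∀ i, (A.deleteRowCol i).PosSemidef) (hdet : A.det ≠ 0) (i : ι) : 0 < A i i := by
  have exists_notMem (s : Finset ι) (hs : #s < 3) : ∃ k, k ∉ s := by
    obtain ⟨k, -, hk⟩ := exists_mem_notMem_of_card_lt_card (s := s) (t := univ)
      (by simpa using hs.trans_le hι)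
    exact ⟨k, hk⟩
  obtain ⟨j, hj⟩ := exists_notMem {i} (by simp)
  refine ((hloc j).diag_nonneg (i := ⟨i, by simpa [eq_comm] using hj⟩)).lt_of_ne fun hzero => ?_
  rw [deleteRowCol_apply] at hzero
  refine hdet (det_eq_zero_of_row_eq_zero i fun j => ?_)
  obtain ⟨k, hk⟩ := exists_notMem {i, j} (card_le_two.trans_lt (by norm_num))
  simp only [mem_insert, mem_singleton, not_or] at hk
  have := (hloc k).apply_sq_le_mul ⟨i, Ne.symm hk.1⟩ ⟨j, Ne.symm hk.2⟩
  simp only [deleteRowCol_apply, ← hzero, zero_mul] at this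
  exact pow_eq_zero_iff (n := 2) (by norm_num) |>.mp (le_antisymm this (sq_nonneg _))

lemma dotProduct_mulVec_nonneg_of_posSemidef_deleteRowCol {A : Matrix ι ι ℝ} {i : ι}
    (h : (A.deleteRowCol i).PosSemidef) {x : ι → ℝ} (hx : x i = 0) : 0 ≤ x ⬝ᵥ A *ᵥ x := by
  have key := h.dotProduct_mulVec_nonneg (fun j => x j)
  simp only [star_trivial, dotProduct, mulVec, deleteRowCol_apply] at key ⊢
  simpa only [Fintype.sum_eq_add_sum_subtype_ne _ i, hx, zero_mul, mul_zero, zero_add] using key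

lemma deleteRowCol_diagonal_mul_mul_diagonal {R : Type*} [CommSemiring R] (d : ι → R)
    (A : Matrix ι ι R) (i : ι) :
    (diagonal d * A * diagonal d).deleteRowCol i =
      diagonal (fun j : {j // j ≠ i} => d j) * A.deleteRowCol i *
        diagonal (fun j : {j // j ≠ i} => d j) := by
  ext j k
  simp [mul_diagonal, diagonal_mul]

lemma exists_diag_eq_one_of_diag_pos {A : Matrix ι ι ℝ} (hA : A.IsHermitian)
    (hloc : ∀ i, (A.deleteRowCol i).PosSemidef) (hdiag : ∀ i, 0 < A i i) :
    ∃ B : Matrix ι ι ℝ, B.IsHermitian ∧ (∀ i, (B.deleteRowCol i).PosSemidef) ∧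
      (∀ i, B i i = 1) ∧ A.det = B.det * ∏ i, A i i := by
  set d : ι → ℝ := fun i => (√(A i i))⁻¹
  have hd : ∀ i, d i * A i i * d i = 1 := fun i => by
    simp only [d]
    field_simp
    rw [Real.sq_sqrt (hdiag i).le, div_self (hdiag i).ne']
  refine ⟨diagonal d * A * diagonal d, ?_, fun i => ?_, fun i => ?_, ?_⟩
  · simpa using isHermitian_mul_mul_conjTranspose (diagonal d) hA
  · rw [deleteRowCol_diagonal_mul_mul_diagonal]
    simpa using (hloc i).mul_mul_conjTranspose_same (diagonal fun j : {j // j ≠ i} => d j)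
  · simpa [mul_diagonal, diagonal_mul] using hd i
  · calc A.det = A.det * ∏ i, (d i * A i i * d i) := by simp [hd]
      _ = (diagonal d * A * diagonal d).det * ∏ i, A i i := by
        simp only [det_mul, det_diagonal, prod_mul_distrib]
        ring

lemma IsHermitian.eq_of_eigenvalues_neg {B : Matrix ι ι ℝ} (hB : B.IsHermitian) {i : ι}
    (hq : ∀ x : ι → ℝ, x i = 0 → 0 ≤ x ⬝ᵥ B *ᵥ x) {j k : ι}
    (hj : hB.eigenvalues j < 0) (hk : hB.eigenvalues k < 0) : j = k := by
  by_contra hne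
  set u : ι → ℝ := ⇑(hB.eigenvectorBasis j)
  set w : ι → ℝ := ⇑(hB.eigenvectorBasis k)
  have horth : ∀ a b, ⇑(hB.eigenvectorBasis a) ⬝ᵥ ⇑(hB.eigenvectorBasis b) =
      if a = b then 1 else 0 := fun a b => by
    simpa [EuclideanSpace.inner_eq_star_dotProduct, dotProduct_comm] using
      orthonormal_iff_ite.mp hB.eigenvectorBasis.orthonormal a b
  have hform (a b : ℝ) : (a • u + b • w) ⬝ᵥ B *ᵥ (a • u + b • w) =
      a ^ 2 * hB.eigenvalues j + b ^ 2 * hB.eigenvalues k := by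
    simp only [mulVec_add, mulVec_smul, hB.mulVec_eigenvectorBasis, add_dotProduct,
      dotProduct_add, smul_dotProduct, dotProduct_smul, smul_eq_mul, u, w, horth,
      ↓reduceIte, if_neg hne, if_neg (Ne.symm hne)]
    ring
  obtain ⟨a, b, hab, hi⟩ : ∃ a b : ℝ, (a ≠ 0 ∨ b ≠ 0) ∧ a * u i + b * w i = 0 := by
    by_cases hu : u i = 0
    · exact ⟨1, 0, Or.inl one_ne_zero, by simp [hu]⟩
    · exact ⟨w i, -u i, Or.inr (neg_ne_zero.mpr hu), by ring⟩
  have hnonneg := hq (a • u + b • w) (by simpa using hi)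
  rw [hform] at hnonneg
  rcases hab with ha | hb
  · nlinarith [sq_pos_of_ne_zero ha, sq_nonneg b]
  · nlinarith [sq_pos_of_ne_zero hb, sq_nonneg a]

lemma IsHermitian.eigenvalues_ne_zero {B : Matrix ι ι ℝ} (hB : B.IsHermitian) (hdet : B.det ≠ 0)
    (i : ι) : hB.eigenvalues i ≠ 0 := fun hi =>
  hdet (by simpa [hB.det_eq_prod_eigenvalues] using Finset.prod_eq_zero (mem_univ i) hi)

lemma IsHermitian.trace_inv_eq_sum_inv_eigenvalues {B : Matrix ι ι ℝ} (hB : B.IsHermitian)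
    (hdet : B.det ≠ 0) : B⁻¹.trace = ∑ i, (hB.eigenvalues i)⁻¹ := by
  have hinv : B⁻¹ = Unitary.conjStarAlgAut ℝ _ hB.eigenvectorUnitary
      (diagonal fun i => (hB.eigenvalues i)⁻¹) := by
    refine inv_eq_right_inv ?_
    conv_lhs => arg 1; rw [hB.spectral_theorem]
    rw [← map_mul, diagonal_mul_diagonal]
    simp [hB.eigenvalues_ne_zero hdet]
  rw [hinv, Unitary.conjStarAlgAut_apply, trace_mul_cycle, Unitary.coe_star_mul_self, one_mul,
    trace_diagonal]

lemma adjugate_apply_self {R : Type*} [CommRing R] {n : ℕ} (A : Matrix (Fin n) (Fin n) R)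
    (i : Fin n) : A.adjugate i i = (A.deleteRowCol i).det := by
  cases n with
  | zero => exact i.elim0
  | succ n =>
    rw [adjugate_fin_succ_eq_det_submatrix, ← det_submatrix_equiv_self (finSuccAboveEquiv i),
      Even.neg_one_pow ⟨i, rfl⟩, one_mul]
    rfl

lemma inv_apply_self_nonpos {n : ℕ} {A : Matrix (Fin n) (Fin n) ℝ} (hdet : A.det < 0)
    {i : Fin n} (h : (A.deleteRowCol i).PosSemidef) : A⁻¹ i i ≤ 0 := by
  rw [inv_def, smul_apply, adjugate_apply_self, Ring.inverse_eq_inv, smul_eq_mul]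
  exact mul_nonpos_of_nonpos_of_nonneg (inv_nonpos.mpr hdet.le) h.det_nonneg

end Matrix

lemma Real.prod_le_sum_div_card_pow {ι : Type*} {s : Finset ι} (hs : s.Nonempty) {z : ι → ℝ}
    (hz : ∀ i ∈ s, 0 ≤ z i) : ∏ i ∈ s, z i ≤ ((∑ i ∈ s, z i) / #s) ^ #s := by
  have hmean := Real.geom_mean_le_arith_mean s (fun _ => 1) z (by simp) (by simpa) hz
  simp only [Real.rpow_one, sum_const, nsmul_eq_mul, mul_one, one_mul] at hmean
  calc ∏ i ∈ s, z i = ((∏ i ∈ s, z i) ^ ((#s : ℝ)⁻¹)) ^ #s :=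
        (Real.rpow_inv_natCast_pow (prod_nonneg hz) hs.card_pos.ne').symm
    _ ≤ ((∑ i ∈ s, z i) / #s) ^ #s :=
        pow_le_pow_left₀ (Real.rpow_nonneg (prod_nonneg hz) _) hmean _

lemma mul_prod_le_of_sum_inv_le {ι : Type*} {s : Finset ι} {x : ι → ℝ} {m : ℝ} (hs : 2 ≤ #s)
    (hx : ∀ i ∈ s, 0 < x i) (hm : 0 < m) (hsum : ∑ i ∈ s, x i = #s + 1 + m)
    (hinv : ∑ i ∈ s, (x i)⁻¹ ≤ m⁻¹) :
    m * ∏ i ∈ s, x i ≤ 1 / (#s - 1) * (#s / (#s - 1)) ^ #s := by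
  have hk : (2 : ℝ) ≤ #s := by exact_mod_cast hs
  set k : ℝ := (#s : ℝ)
  have hm_le : m ≤ 1 / (k - 1) := by
    have hcs : k ^ 2 / (k + 1 + m) ≤ m⁻¹ := by
      simpa [hsum] using (sq_sum_div_le_sum_sq_div s (fun _ => (1 : ℝ)) hx).trans_eq
        (by simp) |>.trans hinv
    rw [div_le_iff₀ (by positivity), inv_mul_eq_div, le_div_iff₀ hm] at hcs
    rw [le_div_iff₀ (by linarith)]
    nlinarith
  have hmean : (k + 1 + m) / k ≤ k / (k - 1) := by
    rw [div_le_div_iff₀ (by positivity) (by linarith)]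
    rw [le_div_iff₀ (by linarith)] at hm_le
    nlinarith
  have hamgm : ∏ i ∈ s, x i ≤ ((k + 1 + m) / k) ^ #s := by
    simpa only [hsum] using
      Real.prod_le_sum_div_card_pow (card_pos.mp (by omega)) fun i hi => (hx i hi).le
  calc m * ∏ i ∈ s, x i ≤ m * ((k + 1 + m) / k) ^ #s := by gcongr
    _ ≤ 1 / (k - 1) * (k / (k - 1)) ^ #s :=
        mul_le_mul hm_le (pow_le_pow_left₀ (by positivity) hmean _) (by positivity)
          (one_div_pos.mpr (by linarith)).le

theorem Matrix.le_det_of_posSemidef_deleteRowCol_of_diag_eq_one {n : ℕ} (hn : 3 ≤ n)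
    {B : Matrix (Fin n) (Fin n) ℝ} (hB : B.IsHermitian)
    (hloc : ∀ i, (B.deleteRowCol i).PosSemidef) (hdiag : ∀ i, B i i = 1) (hdet : B.det < 0) :
    -(1 / ((n : ℝ) - 2)) * (((n : ℝ) - 1) / ((n : ℝ) - 2)) ^ (n - 1) ≤ B.det := by
  set μ := hB.eigenvalues
  have hdetμ : B.det = ∏ i, μ i := by simpa using hB.det_eq_prod_eigenvalues
  obtain ⟨i₀, hi₀⟩ : ∃ i, μ i < 0 := by
    by_contra! h
    exact hdet.not_ge (hdetμ ▸ prod_nonneg fun i _ => h i)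
  set s := univ.erase i₀
  have hcard : #s = n - 1 := by simp [s, card_erase_of_mem]
  have hcardℝ : (#s : ℝ) = n - 1 := by rw [hcard, Nat.cast_sub (by omega), Nat.cast_one]
  have hpos : ∀ k ∈ s, 0 < μ k := fun k hk =>
    (hB.eigenvalues_ne_zero hdet.ne k).lt_or_gt.resolve_left fun hk' => ne_of_mem_erase hk
      (hB.eq_of_eigenvalues_neg
        (fun x hx => dotProduct_mulVec_nonneg_of_posSemidef_deleteRowCol (hloc i₀) hx) hk' hi₀)
  have htrace : ∑ i, μ i = n := by
    simpa [trace, hdiag, μ] using hB.trace_eq_sum_eigenvalues.symm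
  have htrace_inv : ∑ i, (μ i)⁻¹ ≤ 0 := by
    rw [← hB.trace_inv_eq_sum_inv_eigenvalues hdet.ne]
    exact sum_nonpos fun i _ => inv_apply_self_nonpos hdet (hloc i)
  have hsum : ∑ k ∈ s, μ k = #s + 1 + -μ i₀ := by
    rw [hcardℝ]
    linarith [sum_erase_add univ μ (mem_univ i₀)]
  have hinv : ∑ k ∈ s, (μ k)⁻¹ ≤ (-μ i₀)⁻¹ := by
    rw [inv_neg]
    linarith [sum_erase_add univ (fun i => (μ i)⁻¹) (mem_univ i₀)]
  have key := mul_prod_le_of_sum_inv_le (by omega) hpos (neg_pos.mpr hi₀) hsum hinv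
  rw [hcardℝ, hcard, show (n : ℝ) - 1 - 1 = n - 2 by ring] at key
  rw [hdetμ, ← mul_prod_erase univ μ (mem_univ i₀)]
  linarith

/-- Extended Hadamard inequality for `(n-1)`-locally positive semidefinite matrices. -/
theorem extended_hadamard
    (n : ℕ) (hn : 3 ≤ n) (A : Matrix (Fin n) (Fin n) ℝ) (hA : A.IsHermitian)
    (hloc : ∀ i : Fin n,
      (A.submatrix (fun j : {j : Fin n // j ≠ i} => (j : Fin n))
        (fun j : {j : Fin n // j ≠ i} => (j : Fin n))).PosSemidef)
    (hdet : A.det < 0) :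
    A.det ≥ -(1 / ((n : ℝ) - 2)) * (((n : ℝ) - 1) / ((n : ℝ) - 2)) ^ (n - 1) *
      ∏ i : Fin n, A i i := by
  replace hloc : ∀ i, (A.deleteRowCol i).PosSemidef := hloc
  have hdiag : ∀ i, 0 < A i i := diag_pos_of_posSemidef_deleteRowCol (by simpa) hloc hdet.ne
  obtain ⟨B, hB, hBloc, hBdiag, hdetB⟩ := exists_diag_eq_one_of_diag_pos hA hloc hdiag
  have hprod : 0 < ∏ i, A i i := prod_pos fun i _ => hdiag i
  have key := le_det_of_posSemidef_deleteRowCol_of_diag_eq_one hn hB hBloc hBdiag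
    (neg_of_mul_neg_left (hdetB ▸ hdet) hprod.le)
  rw [hdetB, ge_iff_le]
  exact mul_le_mul_of_nonneg_right key hprod.le
end
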